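/- Let n ≥ 1 and let q = (q₁,…,q_t) and q' = (q₁,…,q_j, r, q_{j+1},…,q_t) be strictly increasing sequences of positions of non-trivial weights of a path (so each weight w_{q_i} ≥ 2 and w_r ≥ 2), with q_j < r < q_{j+1}. Define Σq = Σ_{i=1}^t w_{q_i} + Σ_{i=1}^{t−1} ⌊(q_{i+1}−q_i)/3⌋ − t. Then Σq ≤ Σq'. -/

import Mathlib

/-- The weight-position sum of Definition 5.5:
`Σq = Σᵢ w_{qᵢ} + Σᵢ ⌊(q_{i+1}-q_i)/3⌋ - t`. -/
def wps (w : ℕ → ℕ) (l : List ℕ) : ℤ :=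
  (l.map fun v => (w v : ℤ)).sum
    + ((l.zip l.tail).map fun pr => (((pr.2 - pr.1) / 3 : ℕ) : ℤ)).sum
    - l.length

lemma wps_cons_cons (w : ℕ → ℕ) (x y : ℕ) (l : List ℕ) :
    wps w (x :: y :: l) = (w x : ℤ) + (((y - x) / 3 : ℕ) : ℤ) - 1 + wps w (y :: l) := by
  simp [wps]
  ring

theorem wps_insert_mono (n : ℕ) (hn : 1 ≤ n) (w : ℕ → ℕ)
    (A B : List ℕ) (r : ℕ) (hA : A ≠ []) (hB : B ≠ [])
    (hsorted : (A ++ r :: B).Pairwise (· < ·))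
    (hw : ∀ v ∈ A ++ r :: B, 2 ≤ w v) :
    wps w (A ++ B) ≤ wps w (A ++ r :: B) := by
  induction A with
  | nil => exact absurd rfl hA
  | cons a A' ih =>
    cases A' with
    | nil =>
      obtain ⟨b, B', rfl⟩ : ∃ b B', B = b :: B' := by
        cases B with
        | nil => exact absurd rfl hB
        | cons b B' => exact ⟨b, B', rfl⟩
      show wps w (a :: b :: B') ≤ wps w (a :: r :: b :: B')
      rw [wps_cons_cons, wps_cons_cons, wps_cons_cons]
      simp [List.pairwise_cons] at hsorted
      have har : a < r := hsorted.1.1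
      have hrb : r < b := hsorted.2.1.1
      have hwr : (2 : ℤ) ≤ w r := by exact_mod_cast hw r (by simp)
      have hdiv : ((b - a) / 3 : ℕ) ≤ (r - a) / 3 + (b - r) / 3 + 1 := by omega
      have hdiv' : (((b - a) / 3 : ℕ) : ℤ) ≤ (((r - a) / 3 : ℕ) : ℤ) + (((b - r) / 3 : ℕ) : ℤ) + 1 := by
        exact_mod_cast hdiv
      linarith
    | cons c A'' =>
      have e1 : (a :: c :: A'') ++ B = a :: c :: (A'' ++ B) := by simp
      have e2 : (a :: c :: A'') ++ r :: B = a :: c :: (A'' ++ r :: B) := by simp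
      rw [e1, e2, wps_cons_cons, wps_cons_cons]
      have hs' : ((c :: A'') ++ r :: B).Pairwise (· < ·) := by
        simpa using hsorted.of_cons
      have hw' : ∀ v ∈ (c :: A'') ++ r :: B, 2 ≤ w v := fun v hv =>
        hw v (by simp at hv ⊢; tauto)
      have := ih (by simp) hs' hw'
      simp only [List.cons_append] at this ⊢
      linarith
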